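/- Let ℓ₁,...,ℓ_K: ℝ^d → ℝ be differentiable, L-smooth, bounded below, with all sublevel sets of the average loss compact. Consider the sequence θ^(t+1) = θ^(t) - μ^(t)·G^(t)α^(t), where G^(t) is the matrix of gradients at θ^(t), α^(t) > 0 solves (G^(t))ᵀG^(t)α^(t) = 1/α^(t), and μ^(t) = minᵢ 1/(L·K·αᵢ^(t)). Then μ^(t) → 0 and ‖α^(t)‖ → ∞. -/

import Mathlib

open RealInnerProductSpace Filter Topology

/-! With `g = ∑ⱼ αⱼ ∇ℓⱼ(θ)` the balance equations give `⟪∇ℓᵢ(θ), g⟫ = 1/αᵢ ≥ LKμ` and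
`‖g‖² = K`, so the descent lemma for the `L`-smooth loss `ℓᵢ` shows that the step `θ - μ g`
lowers every single loss by at least `LKμ²/2`. A loss bounded below can only drop by a finite
total amount, hence `∑ μ⁽ᵗ⁾² < ∞` and `μ⁽ᵗ⁾ → 0`. Finally `μ⁽ᵗ⁾ = 1/(LK αⱼ⁽ᵗ⁾)` for some `j`, so
`‖α⁽ᵗ⁾‖ ≥ αⱼ⁽ᵗ⁾ = 1/(LKμ⁽ᵗ⁾) → ∞`. -/

section Descent

variable {E : Type*} [NormedAddCommGroup E] [InnerProductSpace ℝ E] [CompleteSpace E]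

theorem HasGradientAt.hasDerivAt_comp_add_smul {f : E → ℝ} {f' x v : E} {s : ℝ}
    (h : HasGradientAt f f' (x + s • v)) :
    HasDerivAt (fun s : ℝ => f (x + s • v)) ⟪f', v⟫ s := by
  have hline : HasDerivAt (fun s : ℝ => x + s • v) v s := by
    simpa using ((hasDerivAt_id s).smul_const v).const_add x
  exact h.hasFDerivAt.comp_hasDerivAt s hline

theorem le_add_inner_add_sq_of_lipschitz_gradient {f : E → ℝ} {f' : E → E} {L : ℝ}
    (hf : ∀ x, HasGradientAt f (f' x) x) (hL : ∀ x y, ‖f' x - f' y‖ ≤ L * ‖x - y‖) (x v : E) :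
    f (x + v) ≤ f x + ⟪f' x, v⟫ + L / 2 * ‖v‖ ^ 2 := by
  have hφ (s : ℝ) : HasDerivAt (fun s : ℝ => f (x + s • v)) ⟪f' (x + s • v), v⟫ s :=
    (hf _).hasDerivAt_comp_add_smul
  have hB (s : ℝ) : HasDerivAt (fun s : ℝ => f x + s * ⟪f' x, v⟫ + L / 2 * s ^ 2 * ‖v‖ ^ 2)
      (⟪f' x, v⟫ + L * s * ‖v‖ ^ 2) s := by
    have := (((hasDerivAt_id' s).mul_const ⟪f' x, v⟫).const_add (f x)).fun_add
      (((hasDerivAt_pow 2 s).const_mul (L / 2)).mul_const (‖v‖ ^ 2))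
    exact this.congr_deriv (by push_cast; ring)
  have hslope : ∀ s ∈ Set.Ico (0 : ℝ) 1, ⟪f' (x + s • v), v⟫ ≤ ⟪f' x, v⟫ + L * s * ‖v‖ ^ 2 := by
    rintro s ⟨hs, -⟩
    have : ⟪f' (x + s • v) - f' x, v⟫ ≤ L * s * ‖v‖ ^ 2 := calc
      _ ≤ ‖f' (x + s • v) - f' x‖ * ‖v‖ := real_inner_le_norm _ _
      _ ≤ L * ‖s • v‖ * ‖v‖ := by gcongr; simpa using hL (x + s • v) x
      _ = L * s * ‖v‖ ^ 2 := by rw [norm_smul, Real.norm_of_nonneg hs]; ring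
    rw [inner_sub_left] at this
    linarith
  simpa using image_le_of_deriv_right_le_deriv_boundary (a := 0) (b := 1)
    (fun s _ => (hφ s).continuousAt.continuousWithinAt) (fun s _ => (hφ s).hasDerivWithinAt)
    (by simp) (fun s _ => (hB s).continuousAt.continuousWithinAt)
    (fun s _ => (hB s).hasDerivWithinAt) hslope (Set.right_mem_Icc.2 zero_le_one)

theorem le_sub_of_inner_gradient_ge {f : E → ℝ} {f' : E → E} {L c μ : ℝ}
    (hf : ∀ x, HasGradientAt f (f' x) x) (hL : ∀ x y, ‖f' x - f' y‖ ≤ L * ‖x - y‖)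
    {x g : E} (hg : ‖g‖ ^ 2 = c) (hfg : L * c * μ ≤ ⟪f' x, g⟫) (hμ : 0 ≤ μ) :
    f (x - μ • g) ≤ f x - L * c / 2 * μ ^ 2 := by
  have h := le_add_inner_add_sq_of_lipschitz_gradient hf hL x (-(μ • g))
  rw [← sub_eq_add_neg, inner_neg_right, real_inner_smul_right, norm_neg, norm_smul, mul_pow,
    Real.norm_eq_abs, sq_abs, hg] at h
  nlinarith [mul_le_mul_of_nonneg_left hfg hμ]

end Descent

section NashMTL

variable {ι : Type*} [Fintype ι]

theorem norm_sq_sum_smul_eq_card {E : Type*} [NormedAddCommGroup E] [InnerProductSpace ℝ E]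
    {G : ι → E} {α : ι → ℝ} (hα : ∀ i, α i ≠ 0) (heq : ∀ i, ⟪G i, ∑ j, α j • G j⟫ = 1 / α i) :
    ‖∑ j, α j • G j‖ ^ 2 = Fintype.card ι := by
  rw [← real_inner_self_eq_norm_sq, sum_inner]
  simp [real_inner_smul_left, heq, hα]

variable {α : ι → ℝ} {c μ : ℝ}

theorem mul_le_one_div_of_eq_iInf (hc : 0 < c) (hα : ∀ i, 0 < α i)
    (hμ : μ = ⨅ j, 1 / (c * α j)) (i : ι) : c * μ ≤ 1 / α i := by
  have : μ ≤ 1 / (c * α i) := hμ ▸ ciInf_le (Set.finite_range _).bddBelow i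
  rw [le_div_iff₀ (mul_pos hc (hα i))] at this
  rw [le_div_iff₀ (hα i)]
  linarith

theorem exists_eq_inv_mul_of_eq_iInf [Nonempty ι] (hc : c ≠ 0) (hμ : μ = ⨅ j, 1 / (c * α j)) :
    ∃ j, α j = (c * μ)⁻¹ := by
  obtain ⟨j, hj⟩ := exists_eq_ciInf_of_finite (f := fun j => 1 / (c * α j))
  exact ⟨j, by rw [hμ, ← hj, mul_one_div, div_mul_cancel_left₀ hc, inv_inv]⟩

end NashMTL

theorem summable_of_le_sub {u c : ℕ → ℝ} {B : ℝ} (hc : ∀ t, 0 ≤ c t) (hB : ∀ t, B ≤ u t)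
    (h : ∀ t, u (t + 1) ≤ u t - c t) : Summable c :=
  summable_of_sum_range_le hc fun n =>
    calc ∑ t ∈ Finset.range n, c t ≤ ∑ t ∈ Finset.range n, (u t - u (t + 1)) :=
          Finset.sum_le_sum fun t _ => by linarith [h t]
      _ = u 0 - u n := Finset.sum_range_sub' u n
      _ ≤ u 0 - B := by linarith [hB n]

theorem tendsto_zero_of_summable_sq {u : ℕ → ℝ} (h : Summable fun t => u t ^ 2) :
    Tendsto u atTop (𝓝 0) := by
  rw [tendsto_zero_iff_abs_tendsto_zero]
  simpa [Function.comp_def, Real.sqrt_sq_eq_abs] using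
    (Real.continuous_sqrt.tendsto 0).comp h.tendsto_atTop_zero

theorem stmt_9_general {d K : ℕ} (hK : 0 < K) (L : ℝ) (hL : 0 < L)
    (ℓ : Fin K → EuclideanSpace ℝ (Fin d) → ℝ)
    (ℓ' : Fin K → EuclideanSpace ℝ (Fin d) → EuclideanSpace ℝ (Fin d))
    (hdiff : ∀ i x, HasGradientAt (ℓ i) (ℓ' i x) x)
    (hsmooth : ∀ i x y, ‖ℓ' i x - ℓ' i y‖ ≤ L * ‖x - y‖)
    (hbdd : ∀ i, BddBelow (Set.range (ℓ i)))
    (θ : ℕ → EuclideanSpace ℝ (Fin d)) (α : ℕ → Fin K → ℝ) (μ : ℕ → ℝ)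
    (hα : ∀ t i, 0 < α t i)
    (heq : ∀ t i, ⟪ℓ' i (θ t), ∑ j, α t j • ℓ' j (θ t)⟫ = 1 / α t i)
    (hμ : ∀ t, μ t = ⨅ j, 1 / (L * K * α t j))
    (hstep : ∀ t, θ (t + 1) = θ t - μ t • ∑ j, α t j • ℓ' j (θ t)) :
    Filter.Tendsto μ Filter.atTop (nhds 0) ∧
      Filter.Tendsto (fun t => Real.sqrt (∑ i, (α t i) ^ 2)) Filter.atTop Filter.atTop := by
  have : Nonempty (Fin K) := Fin.pos_iff_nonempty.1 hK
  have hLK : 0 < L * K := by positivity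
  choose j hj using fun t => exists_eq_inv_mul_of_eq_iInf hLK.ne' (hμ t)
  have hμpos (t : ℕ) : 0 < μ t :=
    pos_of_mul_pos_right (inv_pos.1 (hj t ▸ hα t (j t))) hLK.le
  let i₀ : Fin K := ⟨0, hK⟩
  have hdecrease (t : ℕ) : ℓ i₀ (θ (t + 1)) ≤ ℓ i₀ (θ t) - L * K / 2 * μ t ^ 2 := by
    rw [hstep]
    refine le_sub_of_inner_gradient_ge (hdiff i₀) (hsmooth i₀) ?_ ?_ (hμpos t).le
    · simpa using norm_sq_sum_smul_eq_card (fun i => (hα t i).ne') (heq t)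
    · exact heq t i₀ ▸ mul_le_one_div_of_eq_iInf hLK (hα t) (hμ t) i₀
  obtain ⟨B, hB⟩ := hbdd i₀
  have hμ0 : Tendsto μ atTop (𝓝 0) := tendsto_zero_of_summable_sq <|
    (summable_mul_left_iff (by positivity)).1 <| summable_of_le_sub (fun t => by positivity)
      (fun t => hB ⟨θ t, rfl⟩) hdecrease
  refine ⟨hμ0, tendsto_atTop_mono (f := fun t => (L * K * μ t)⁻¹) (fun t => ?_) ?_⟩
  · rw [← hj t, Real.le_sqrt' (hα t (j t))]
    exact Finset.single_le_sum (fun i _ => sq_nonneg (α t i)) (Finset.mem_univ _)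
  · refine Tendsto.inv_tendsto_nhdsGT_zero (tendsto_nhdsWithin_iff.2 ⟨?_, ?_⟩)
    · simpa using hμ0.const_mul (L * K)
    · exact Eventually.of_forall fun t => mul_pos hLK (hμpos t)

/-- For the Nash-MTL iteration with `L`-smooth losses bounded below and compact sublevel sets
of the average loss, the step sizes `μ⁽ᵗ⁾` tend to `0` and `‖α⁽ᵗ⁾‖` tends to infinity. -/
theorem stmt_9 {d K : ℕ} (hK : 0 < K) (L : ℝ) (hL : 0 < L)
    (ℓ : Fin K → EuclideanSpace ℝ (Fin d) → ℝ)
    (ℓ' : Fin K → EuclideanSpace ℝ (Fin d) → EuclideanSpace ℝ (Fin d))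
    (hdiff : ∀ i x, HasGradientAt (ℓ i) (ℓ' i x) x)
    (hsmooth : ∀ i x y, ‖ℓ' i x - ℓ' i y‖ ≤ L * ‖x - y‖)
    (hbdd : ∀ i, BddBelow (Set.range (ℓ i)))
    (hsublevel : ∀ c : ℝ, IsCompact {x | (1 / K : ℝ) * ∑ i, ℓ i x ≤ c})
    (θ : ℕ → EuclideanSpace ℝ (Fin d)) (α : ℕ → Fin K → ℝ) (μ : ℕ → ℝ)
    (hα : ∀ t i, 0 < α t i)
    (heq : ∀ t i, ⟪ℓ' i (θ t), ∑ j, α t j • ℓ' j (θ t)⟫ = 1 / α t i)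
    (hμ : ∀ t, μ t = ⨅ j, 1 / (L * K * α t j))
    (hstep : ∀ t, θ (t + 1) = θ t - μ t • ∑ j, α t j • ℓ' j (θ t)) :
    Filter.Tendsto μ Filter.atTop (nhds 0) ∧
      Filter.Tendsto (fun t => Real.sqrt (∑ i, (α t i) ^ 2)) Filter.atTop Filter.atTop :=
  stmt_9_general hK L hL ℓ ℓ' hdiff hsmooth hbdd θ α μ hα heq hμ hstep
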